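/- arXiv:math/9811010 — 5 statements merged into one kernel-verified Lean document; each statement's English description precedes it below -/
import Mathlib

section
/- Let m > 0 and let p : ℝⁿ → ℂ be a function for which there exist R, C₁, C₂ > 0 with C₁(1+‖ξ‖²)^{m/2} ≤ |p(ξ)| ≤ C₂(1+‖ξ‖²)^{m/2} for all ‖ξ‖ > R, and suppose there is ε > 0 such that for all λ in a closed cone P ⊆ ℂ and all ‖ξ‖ > R one has |p(ξ) − λ| ≥ ε|p(ξ)| and |p(ξ) − λ| ≥ ε|λ|. Then there exist constants C₁′, C₂′ > 0 such that for all ‖ξ‖ > R and all λ ∈ P: C₁′·Λ_m(ξ,λ)^m ≤ |p(ξ) − λ| ≤ C₂′·Λ_m(ξ,λ)^m, where Λ_m(ξ,λ) = (1 + ‖ξ‖² + |λ|^{2/m})^{1/2}. -/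
lemma rpow_add_le_aux (s x y : ℝ) (hs : 0 < s) (hx : 0 ≤ x) (hy : 0 ≤ y) :
    (x + y) ^ s ≤ 2 ^ s * (x ^ s + y ^ s) := by
  have hmax : x + y ≤ 2 * max x y := by
    rcases le_total x y with h | h
    · rw [max_eq_right h]; linarith
    · rw [max_eq_left h]; linarith
  have h0 : (0:ℝ) ≤ max x y := le_max_of_le_left hx
  calc (x + y) ^ s ≤ (2 * max x y) ^ s := Real.rpow_le_rpow (by positivity) hmax hs.le
    _ = 2 ^ s * (max x y) ^ s := Real.mul_rpow (by norm_num) h0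
    _ ≤ 2 ^ s * (x ^ s + y ^ s) := by
        apply mul_le_mul_of_nonneg_left _ (Real.rpow_nonneg (by norm_num) s)
        rcases le_total x y with h | h
        · rw [max_eq_right h]
          nlinarith [Real.rpow_nonneg hx s]
        · rw [max_eq_left h]
          nlinarith [Real.rpow_nonneg hy s]

theorem stmt2 (n : ℕ) (m : ℝ) (hm : 0 < m)
    (p : EuclideanSpace ℝ (Fin n) → ℂ) (P : Set ℂ) (hPclosed : IsClosed P)
    (hPcone : ∀ z ∈ P, ∀ t : ℝ, 0 < t → (t : ℂ) * z ∈ P)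
    (R C₁ C₂ : ℝ) (hR : 0 < R) (hC₁ : 0 < C₁) (hC₂ : 0 < C₂)
    (hell : ∀ ξ : EuclideanSpace ℝ (Fin n), R < ‖ξ‖ →
      C₁ * (1 + ‖ξ‖ ^ 2) ^ (m / 2) ≤ ‖p ξ‖ ∧
      ‖p ξ‖ ≤ C₂ * (1 + ‖ξ‖ ^ 2) ^ (m / 2))
    (ε : ℝ) (hε : 0 < ε)
    (hsep : ∀ lam ∈ P, ∀ ξ : EuclideanSpace ℝ (Fin n), R < ‖ξ‖ →
      ε * ‖p ξ‖ ≤ ‖p ξ - lam‖ ∧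
      ε * ‖lam‖ ≤ ‖p ξ - lam‖) :
    ∃ C₁' C₂' : ℝ, 0 < C₁' ∧ 0 < C₂' ∧
      ∀ lam ∈ P, ∀ ξ : EuclideanSpace ℝ (Fin n), R < ‖ξ‖ →
        C₁' * (1 + ‖ξ‖ ^ 2 + ‖lam‖ ^ (2 / m)) ^ (m / 2)
            ≤ ‖p ξ - lam‖ ∧
        ‖p ξ - lam‖
            ≤ C₂' * (1 + ‖ξ‖ ^ 2 + ‖lam‖ ^ (2 / m)) ^ (m / 2) := by
  set s := m / 2 with hsdef
  have hs : 0 < s := by positivity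
  have h2s : (0:ℝ) < 2 ^ s := Real.rpow_pos_of_pos (by norm_num) s
  refine ⟨ε * min C₁ 1 / (2 * 2 ^ s), 2 * max C₂ 1, by positivity, by positivity, ?_⟩
  intro lam hlam ξ hξ
  obtain ⟨hl, hu⟩ := hell ξ hξ
  obtain ⟨h1, h2⟩ := hsep lam hlam ξ hξ
  set x : ℝ := 1 + ‖ξ‖ ^ 2 with hxdef
  set y : ℝ := ‖lam‖ ^ (2 / m) with hydef
  have hx : (0:ℝ) ≤ x := by positivity
  have hy : (0:ℝ) ≤ y := Real.rpow_nonneg (norm_nonneg lam) _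
  have hys : y ^ s = ‖lam‖ := by
    rw [hydef, ← Real.rpow_mul (norm_nonneg lam)]
    have : 2 / m * s = 1 := by rw [hsdef]; field_simp
    rw [this, Real.rpow_one]
  have hxs : (0:ℝ) ≤ x ^ s := Real.rpow_nonneg hx s
  have hyss : (0:ℝ) ≤ y ^ s := Real.rpow_nonneg hy s
  have hxle : x ^ s ≤ (x + y) ^ s :=
    Real.rpow_le_rpow hx (le_add_of_nonneg_right hy) hs.le
  have hyle : y ^ s ≤ (x + y) ^ s :=
    Real.rpow_le_rpow hy (le_add_of_nonneg_left hx) hs.le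
  have hsum : (x + y) ^ s ≤ 2 ^ s * (x ^ s + y ^ s) := rpow_add_le_aux s x y hs hx hy
  have htri : ‖p ξ - lam‖ ≤ ‖p ξ‖ + ‖lam‖ := by
    simpa using norm_sub_le (p ξ) lam
  constructor
  · rw [div_mul_eq_mul_div, div_le_iff₀ (by positivity)]
    have hmin1 : min C₁ 1 * x ^ s ≤ C₁ * x ^ s :=
      mul_le_mul_of_nonneg_right (min_le_left _ _) hxs
    have hmin2 : min C₁ 1 * y ^ s ≤ 1 * y ^ s :=
      mul_le_mul_of_nonneg_right (min_le_right _ _) hyss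
    have hA : ε * (C₁ * x ^ s) ≤ ‖p ξ - lam‖ :=
      le_trans (mul_le_mul_of_nonneg_left hl hε.le) h1
    have hB : ε * y ^ s ≤ ‖p ξ - lam‖ := by rw [hys]; exact h2
    nlinarith [mul_le_mul_of_nonneg_left hsum (mul_nonneg hε.le (le_min hC₁.le zero_le_one)),
      mul_le_mul_of_nonneg_left hmin1 hε.le, mul_le_mul_of_nonneg_left hmin2 hε.le]
  · have hmax1 : C₂ * x ^ s ≤ max C₂ 1 * x ^ s :=
      mul_le_mul_of_nonneg_right (le_max_left _ _) hxs
    have hmax2 : 1 * y ^ s ≤ max C₂ 1 * y ^ s :=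
      mul_le_mul_of_nonneg_right (le_max_right _ _) hyss
    have hmaxpos : (0:ℝ) ≤ max C₂ 1 := le_max_of_le_right zero_le_one
    nlinarith [mul_le_mul_of_nonneg_left hxle hmaxpos,
      mul_le_mul_of_nonneg_left hyle hmaxpos, hys, htri]
end

section
/- Let p : ℝⁿ → ℂ be a polynomial of total degree at most m (m a positive integer). Then for every multi-index α there exists a constant C_α such that for all ξ ∈ ℝⁿ and all λ ∈ ℂ: |∂^α(p − λ)(ξ)| ≤ C_α·(1 + ‖ξ‖² + |λ|^{2/m})^{(m − |α|)/2}. -/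
open Finset

lemma pow_bd {E : Type*} [NormedAddCommGroup E] [NormedSpace ℝ E]
    (L : E →L[ℝ] ℂ) (hL : ∀ x, ‖L x‖ ≤ ‖x‖) :
    ∀ q j : ℕ, ∃ c : ℝ, 0 ≤ c ∧ ∀ (ξ : E) (B : ℝ), 1 + ‖ξ‖ ^ 2 ≤ B →
      ‖iteratedFDeriv ℝ j (fun x => (L x) ^ q) ξ‖ ≤ c * B ^ (((q : ℝ) - j) / 2) := by
  have hL1 : ‖L‖ ≤ 1 := L.opNorm_le_bound zero_le_one (fun x => by simpa using hL x)
  have hLd : ∀ (i : ℕ) (ξ : E) (B : ℝ), 1 + ‖ξ‖ ^ 2 ≤ B →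
      ‖iteratedFDeriv ℝ i (fun x => L x) ξ‖ ≤ B ^ (((1 : ℝ) - i) / 2) := by
    intro i ξ B hB
    have hB1 : (1 : ℝ) ≤ B := le_trans (le_add_of_nonneg_right (by positivity)) hB
    have hB0 : (0 : ℝ) < B := lt_of_lt_of_le one_pos hB1
    match i with
    | 0 =>
      rw [norm_iteratedFDeriv_zero]
      have h1 : ‖L ξ‖ ≤ Real.sqrt B := by
        refine (hL ξ).trans ?_
        rw [show ‖ξ‖ = Real.sqrt (‖ξ‖ ^ 2) from (Real.sqrt_sq (norm_nonneg _)).symm]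
        exact Real.sqrt_le_sqrt (by nlinarith)
      have he : ((1 : ℝ) - ((0 : ℕ) : ℝ)) / 2 = 1 / 2 := by norm_num
      rw [he, ← Real.sqrt_eq_rpow]
      exact h1
    | 1 =>
      have h2 : ‖iteratedFDeriv ℝ 1 (fun x => L x) ξ‖ = ‖L‖ := by
        rw [← norm_iteratedFDeriv_fderiv (n := 0), norm_iteratedFDeriv_zero]
        congr 1
        exact L.fderiv
      have he : ((1 : ℝ) - ((1 : ℕ) : ℝ)) / 2 = 0 := by norm_num
      rw [h2, he, Real.rpow_zero]
      exact hL1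
    | (i + 2) =>
      have h1 : (fderiv ℝ fun x => L x) = fun _ : E => L := by
        funext x; exact L.fderiv
      have h2 := norm_iteratedFDeriv_fderiv (𝕜 := ℝ) (f := fun x => L x) (n := i + 1) (x := ξ)
      rw [h1, iteratedFDeriv_const_of_ne (Nat.succ_ne_zero i)] at h2
      simp only [Pi.zero_apply, norm_zero] at h2
      rw [← h2]
      positivity
  intro q
  induction q with
  | zero =>
    intro j
    refine ⟨1, zero_le_one, fun ξ B hB => ?_⟩
    have hB1 : (1 : ℝ) ≤ B := le_trans (le_add_of_nonneg_right (by positivity)) hB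
    have hB0 : (0 : ℝ) < B := lt_of_lt_of_le one_pos hB1
    simp only [pow_zero]
    match j with
    | 0 =>
      rw [norm_iteratedFDeriv_zero]
      norm_num
    | (j + 1) =>
      rw [iteratedFDeriv_const_of_ne (Nat.succ_ne_zero j)]
      simp only [Pi.zero_apply, norm_zero]
      positivity
  | succ q IH =>
    choose c hc0 hc using IH
    intro j
    refine ⟨∑ i ∈ Finset.range (j + 1), (j.choose i : ℝ) * c (j - i), ?_, fun ξ B hB => ?_⟩
    · exact Finset.sum_nonneg fun i _ => mul_nonneg (by positivity) (hc0 _)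
    · have hB1 : (1 : ℝ) ≤ B := le_trans (le_add_of_nonneg_right (by positivity)) hB
      have hB0 : (0 : ℝ) < B := lt_of_lt_of_le one_pos hB1
      have hfL : ContDiff ℝ ((⊤ : ℕ∞) : WithTop ℕ∞) (fun x => L x) := L.contDiff
      have hfq : ContDiff ℝ ((⊤ : ℕ∞) : WithTop ℕ∞) (fun x => (L x) ^ q) := hfL.pow q
      have hmain := norm_iteratedFDeriv_mul_le (𝕜 := ℝ) hfL hfq ξ (n := j)
        (by exact_mod_cast le_top)
      have hfun : (fun x => (L x) ^ (q + 1)) = fun x => L x * (L x) ^ q := by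
        funext x; rw [pow_succ']
      rw [hfun]
      refine hmain.trans ?_
      rw [Finset.sum_mul]
      refine Finset.sum_le_sum fun i hi => ?_
      rw [Finset.mem_range] at hi
      have hij : i ≤ j := Nat.lt_succ_iff.mp hi
      have h1 := hLd i ξ B hB
      have h2 := hc (j - i) ξ B hB
      have hexp : B ^ (((1 : ℝ) - i) / 2) * B ^ (((q : ℝ) - ((j - i : ℕ) : ℝ)) / 2)
          = B ^ ((((q + 1 : ℕ) : ℝ) - j) / 2) := by
        rw [← Real.rpow_add hB0]
        congr 1
        rw [Nat.cast_sub hij]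
        push_cast
        ring
      calc (j.choose i : ℝ) * ‖iteratedFDeriv ℝ i (fun x => L x) ξ‖ *
            ‖iteratedFDeriv ℝ (j - i) (fun x => (L x) ^ q) ξ‖
          ≤ (j.choose i : ℝ) * B ^ (((1 : ℝ) - i) / 2) *
            (c (j - i) * B ^ (((q : ℝ) - ((j - i : ℕ) : ℝ)) / 2)) := by
            gcongr
        _ = (j.choose i : ℝ) * c (j - i) * B ^ ((((q + 1 : ℕ) : ℝ) - j) / 2) := by
            rw [← hexp]; ring

noncomputable def LL (n : ℕ) (i : Fin n) : EuclideanSpace ℝ (Fin n) →L[ℝ] ℂ :=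
  Complex.ofRealCLM.comp (EuclideanSpace.proj i)

lemma LL_apply (n : ℕ) (i : Fin n) (x : EuclideanSpace ℝ (Fin n)) : LL n i x = (x i : ℂ) := rfl

lemma LL_norm (n : ℕ) (i : Fin n) (x : EuclideanSpace ℝ (Fin n)) : ‖LL n i x‖ ≤ ‖x‖ := by
  have h1 : ‖LL n i x‖ = ‖x i‖ := by
    rw [LL_apply]; exact Complex.norm_real _
  rw [h1, EuclideanSpace.norm_eq]
  rw [show ‖x i‖ = Real.sqrt (‖x i‖ ^ 2) from (Real.sqrt_sq (norm_nonneg _)).symm]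
  exact Real.sqrt_le_sqrt (Finset.single_le_sum (f := fun j => ‖x j‖ ^ 2)
    (fun j _ => by positivity) (Finset.mem_univ i))

lemma mono_bd (n : ℕ) (s : Fin n →₀ ℕ) (k : ℕ) :
    ∃ C : ℝ, 0 ≤ C ∧ ∀ (ξ : EuclideanSpace ℝ (Fin n)) (B : ℝ), 1 + ‖ξ‖ ^ 2 ≤ B →
      ‖iteratedFDeriv ℝ k (fun x : EuclideanSpace ℝ (Fin n) => ∏ i, (x i : ℂ) ^ s i) ξ‖
        ≤ C * B ^ ((((∑ i, s i : ℕ) : ℝ) - k) / 2) := by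
  classical
  choose c hc0 hc using fun (i : Fin n) => pow_bd (LL n i) (LL_norm n i) (s i)
  refine ⟨∑ p ∈ Finset.sym (Finset.univ : Finset (Fin n)) k,
      ((p : Multiset (Fin n)).countPerms : ℝ) * ∏ i, c i ((p : Multiset (Fin n)).count i),
      ?_, fun ξ B hB => ?_⟩
  · exact Finset.sum_nonneg fun p _ => mul_nonneg (by positivity)
      (Finset.prod_nonneg fun i _ => hc0 _ _)
  · have hB1 : (1 : ℝ) ≤ B := le_trans (le_add_of_nonneg_right (by positivity)) hB
    have hB0 : (0 : ℝ) < B := lt_of_lt_of_le one_pos hB1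
    have hcd : ∀ i : Fin n, ContDiff ℝ ((⊤ : ℕ∞) : WithTop ℕ∞)
        (fun x : EuclideanSpace ℝ (Fin n) => (x i : ℂ) ^ s i) :=
      fun i => ((LL n i).contDiff).pow _
    have hmain := norm_iteratedFDeriv_prod_le (𝕜 := ℝ) (u := (Finset.univ : Finset (Fin n)))
      (f := fun (i : Fin n) (x : EuclideanSpace ℝ (Fin n)) => (x i : ℂ) ^ s i)
      (fun i _ => hcd i) (x := ξ) (n := k) (by exact_mod_cast le_top)
    refine le_trans (le_of_eq (by congr 1)) (hmain.trans ?_)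
    rw [Finset.sum_mul]
    refine Finset.sum_le_sum fun p hp => ?_
    have hcount : ∑ i, ((p : Multiset (Fin n)).count i) = k := by
      rw [Multiset.sum_count_eq_card (fun a _ => Finset.mem_univ a)]
      exact p.2
    have hprod : ∏ i, ‖iteratedFDeriv ℝ ((p : Multiset (Fin n)).count i)
          (fun x : EuclideanSpace ℝ (Fin n) => (x i : ℂ) ^ s i) ξ‖
        ≤ ∏ i, (c i ((p : Multiset (Fin n)).count i) *
            B ^ (((s i : ℝ) - ((p : Multiset (Fin n)).count i : ℝ)) / 2)) :=
      Finset.prod_le_prod (fun i _ => norm_nonneg _) (fun i _ => hc i _ ξ B hB)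
    have hsplit : ∏ i, (c i ((p : Multiset (Fin n)).count i) *
            B ^ (((s i : ℝ) - ((p : Multiset (Fin n)).count i : ℝ)) / 2))
        = (∏ i, c i ((p : Multiset (Fin n)).count i)) *
          B ^ ((((∑ i, s i : ℕ) : ℝ) - k) / 2) := by
      rw [Finset.prod_mul_distrib, ← Real.rpow_sum_of_pos hB0]
      congr 2
      rw [← Finset.sum_div, Finset.sum_sub_distrib, ← Nat.cast_sum, ← Nat.cast_sum, hcount]
    calc ((p : Multiset (Fin n)).countPerms : ℝ) * ∏ i, ‖iteratedFDeriv ℝ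
            ((p : Multiset (Fin n)).count i)
            (fun x : EuclideanSpace ℝ (Fin n) => (x i : ℂ) ^ s i) ξ‖
        ≤ ((p : Multiset (Fin n)).countPerms : ℝ) *
            ((∏ i, c i ((p : Multiset (Fin n)).count i)) *
              B ^ ((((∑ i, s i : ℕ) : ℝ) - k) / 2)) := by
          rw [← hsplit]
          exact mul_le_mul_of_nonneg_left hprod (by positivity)
      _ = ((p : Multiset (Fin n)).countPerms : ℝ) *
            (∏ i, c i ((p : Multiset (Fin n)).count i)) *
            B ^ ((((∑ i, s i : ℕ) : ℝ) - k) / 2) := by ring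

lemma contDiff_evalP (n : ℕ) (P : MvPolynomial (Fin n) ℂ) :
    ContDiff ℝ ((⊤ : ℕ∞) : WithTop ℕ∞)
      (fun x : EuclideanSpace ℝ (Fin n) => MvPolynomial.eval (fun i => (x i : ℂ)) P) := by
  classical
  have hfeq : (fun x : EuclideanSpace ℝ (Fin n) => MvPolynomial.eval (fun i => (x i : ℂ)) P)
      = fun x => ∑ s ∈ P.support, MvPolynomial.coeff s P * ∏ i, (x i : ℂ) ^ s i := by
    funext x; rw [MvPolynomial.eval_eq']
  rw [hfeq]
  exact ContDiff.sum fun s _ =>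
    (contDiff_prod fun i _ => ((LL n i).contDiff).pow _).const_smul (MvPolynomial.coeff s P)

lemma poly_bd (n m : ℕ) (P : MvPolynomial (Fin n) ℂ) (hdeg : P.totalDegree ≤ m) (k : ℕ) :
    ∃ C : ℝ, 0 ≤ C ∧ ∀ (ξ : EuclideanSpace ℝ (Fin n)) (B : ℝ), 1 + ‖ξ‖ ^ 2 ≤ B →
      ‖iteratedFDeriv ℝ k (fun x : EuclideanSpace ℝ (Fin n) =>
          MvPolynomial.eval (fun i => (x i : ℂ)) P) ξ‖ ≤ C * B ^ (((m : ℝ) - k) / 2) := by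
  classical
  choose c hc0 hc using fun (s : Fin n →₀ ℕ) => mono_bd n s k
  refine ⟨∑ s ∈ P.support, ‖MvPolynomial.coeff s P‖ * c s, Finset.sum_nonneg
    (fun s _ => mul_nonneg (norm_nonneg _) (hc0 s)), fun ξ B hB => ?_⟩
  have hB1 : (1 : ℝ) ≤ B := le_trans (le_add_of_nonneg_right (by positivity)) hB
  have hB0 : (0 : ℝ) < B := lt_of_lt_of_le one_pos hB1
  have hfeq : (fun x : EuclideanSpace ℝ (Fin n) => MvPolynomial.eval (fun i => (x i : ℂ)) P)
      = fun x => ∑ s ∈ P.support,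
          (MvPolynomial.coeff s P • fun y : EuclideanSpace ℝ (Fin n) => ∏ i, (y i : ℂ) ^ s i) x := by
    funext x; rw [MvPolynomial.eval_eq']; rfl
  have hcd : ∀ s ∈ P.support, ContDiff ℝ (k : WithTop ℕ∞)
      ((MvPolynomial.coeff s P • fun y : EuclideanSpace ℝ (Fin n) => ∏ i, (y i : ℂ) ^ s i)) :=
    fun s _ => (((contDiff_prod fun i _ => ((LL n i).contDiff).pow
      (s i)).const_smul (MvPolynomial.coeff s P)).of_le (by exact_mod_cast le_top))
  rw [hfeq, iteratedFDeriv_sum hcd, Finset.sum_apply]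
  refine (norm_sum_le _ _).trans ?_
  rw [Finset.sum_mul]
  refine Finset.sum_le_sum fun s hs => ?_
  have hcds : ContDiff ℝ (k : WithTop ℕ∞)
      (fun y : EuclideanSpace ℝ (Fin n) => ∏ i, (y i : ℂ) ^ s i) :=
    ((contDiff_prod fun i _ => ((LL n i).contDiff).pow (s i)).of_le (by exact_mod_cast le_top))
  rw [iteratedFDeriv_const_smul_apply hcds.contDiffAt, norm_smul]
  have hdle : ((∑ i, s i : ℕ) : ℝ) ≤ (m : ℝ) := by
    have h1 : (∑ i, s i) = s.sum fun _ e => e := (Finsupp.sum_fintype s (fun _ e => e) (fun _ => rfl)).symm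
    exact_mod_cast h1 ▸ le_trans (MvPolynomial.le_totalDegree hs) hdeg
  have hb := hc s ξ B hB
  calc ‖MvPolynomial.coeff s P‖ *
        ‖iteratedFDeriv ℝ k (fun y : EuclideanSpace ℝ (Fin n) => ∏ i, (y i : ℂ) ^ s i) ξ‖
      ≤ ‖MvPolynomial.coeff s P‖ * (c s * B ^ ((((∑ i, s i : ℕ) : ℝ) - k) / 2)) :=
        mul_le_mul_of_nonneg_left hb (norm_nonneg _)
    _ ≤ ‖MvPolynomial.coeff s P‖ * (c s * B ^ (((m : ℝ) - k) / 2)) := by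
        have := Real.rpow_le_rpow_of_exponent_le hB1
          (by linarith : (((∑ i, s i : ℕ) : ℝ) - k) / 2 ≤ ((m : ℝ) - k) / 2)
        exact mul_le_mul_of_nonneg_left (mul_le_mul_of_nonneg_left this (hc0 s)) (norm_nonneg _)
    _ = ‖MvPolynomial.coeff s P‖ * c s * B ^ (((m : ℝ) - k) / 2) := by ring

theorem stmt3 (n m : ℕ) (hm : 0 < m) (P : MvPolynomial (Fin n) ℂ)
    (hdeg : P.totalDegree ≤ m) :
    ∀ k : ℕ, ∃ C : ℝ, ∀ (ξ : EuclideanSpace ℝ (Fin n)) (lam : ℂ),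
      ‖iteratedFDeriv ℝ k
          (fun x : EuclideanSpace ℝ (Fin n) =>
            MvPolynomial.eval (fun i => (x i : ℂ)) P - lam) ξ‖
        ≤ C * (1 + ‖ξ‖ ^ 2 + ‖lam‖ ^ (2 / (m : ℝ))) ^ (((m : ℝ) - k) / 2) := by
  intro k
  obtain ⟨C, hC0, hC⟩ := poly_bd n m P hdeg k
  refine ⟨C + 1, fun ξ lam => ?_⟩
  set t : ℝ := ‖lam‖ ^ (2 / (m : ℝ)) with ht
  have ht0 : 0 ≤ t := Real.rpow_nonneg (norm_nonneg _) _
  have hB : 1 + ‖ξ‖ ^ 2 ≤ 1 + ‖ξ‖ ^ 2 + t := by linarith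
  have hB1 : (1 : ℝ) ≤ 1 + ‖ξ‖ ^ 2 + t := le_trans (le_add_of_nonneg_right (by positivity)) hB
  have hB0 : (0 : ℝ) < 1 + ‖ξ‖ ^ 2 + t := lt_of_lt_of_le one_pos hB1
  have hrpow0 : (0 : ℝ) ≤ (1 + ‖ξ‖ ^ 2 + t) ^ (((m : ℝ) - k) / 2) := Real.rpow_nonneg hB0.le _
  have hbound := hC ξ (1 + ‖ξ‖ ^ 2 + t) hB
  rcases Nat.eq_zero_or_pos k with hk | hk
  · subst hk
    rw [norm_iteratedFDeriv_zero]
    rw [norm_iteratedFDeriv_zero] at hbound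
    have h3 : ‖lam‖ ≤ (1 + ‖ξ‖ ^ 2 + t) ^ (((m : ℝ) - (0 : ℕ)) / 2) := by
      have hm0 : (m : ℝ) ≠ 0 := Nat.cast_ne_zero.mpr hm.ne'
      have habs : ‖lam‖ = t ^ ((m : ℝ) / 2) := by
        rw [ht, ← Real.rpow_mul (norm_nonneg lam),
          show (2 / (m : ℝ)) * ((m : ℝ) / 2) = 1 by field_simp, Real.rpow_one]
      rw [habs, show ((m : ℝ) - ((0 : ℕ) : ℝ)) / 2 = (m : ℝ) / 2 by norm_num]
      exact Real.rpow_le_rpow ht0 (by nlinarith [sq_nonneg ‖ξ‖]) (by positivity)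
    calc ‖MvPolynomial.eval (fun i => ((ξ i : ℝ) : ℂ)) P - lam‖
        ≤ ‖MvPolynomial.eval (fun i => ((ξ i : ℝ) : ℂ)) P‖ + ‖lam‖ := norm_sub_le _ _
      _ ≤ C * (1 + ‖ξ‖ ^ 2 + t) ^ (((m : ℝ) - (0 : ℕ)) / 2) +
          (1 + ‖ξ‖ ^ 2 + t) ^ (((m : ℝ) - (0 : ℕ)) / 2) := by
          refine add_le_add hbound ?_
          exact h3
      _ = (C + 1) * (1 + ‖ξ‖ ^ 2 + t) ^ (((m : ℝ) - (0 : ℕ)) / 2) := by ring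
  · have hsmooth : ContDiff ℝ (k : WithTop ℕ∞)
        (fun x : EuclideanSpace ℝ (Fin n) => MvPolynomial.eval (fun i => (x i : ℂ)) P) :=
      (contDiff_evalP n P).of_le (by exact_mod_cast le_top)
    have heq : iteratedFDeriv ℝ k
        (fun x : EuclideanSpace ℝ (Fin n) =>
          MvPolynomial.eval (fun i => (x i : ℂ)) P - lam) ξ =
        iteratedFDeriv ℝ k
          (fun x : EuclideanSpace ℝ (Fin n) => MvPolynomial.eval (fun i => (x i : ℂ)) P) ξ := by
      have h0 : (fun x : EuclideanSpace ℝ (Fin n) =>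
          MvPolynomial.eval (fun i => (x i : ℂ)) P - lam)
          = fun x => MvPolynomial.eval (fun i => (x i : ℂ)) P +
              (fun _ : EuclideanSpace ℝ (Fin n) => -lam) x := by
        funext x; simp [sub_eq_add_neg]
      rw [h0, iteratedFDeriv_add_apply' hsmooth.contDiffAt contDiff_const.contDiffAt,
        iteratedFDeriv_const_of_ne hk.ne']
      simp
    rw [heq]
    calc ‖iteratedFDeriv ℝ k
          (fun x : EuclideanSpace ℝ (Fin n) => MvPolynomial.eval (fun i => (x i : ℂ)) P) ξ‖
        ≤ C * (1 + ‖ξ‖ ^ 2 + t) ^ (((m : ℝ) - k) / 2) := hbound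
      _ ≤ (C + 1) * (1 + ‖ξ‖ ^ 2 + t) ^ (((m : ℝ) - k) / 2) := by nlinarith
end

section
/- Let ρ ∈ (1/2, 1], m ∈ ℝ, m₀ < m with δ := ρ − (m − m₀) > 0, and let p ∈ S^m_ρ(ℝⁿ) satisfy p(ξ) ≥ 0 for all ξ. Set q(ξ) = p(ξ) + (1+‖ξ‖²)^{m₀/2}. Then: (1) (1+‖ξ‖²)^{m₀/2} ≤ q(ξ) ≤ C·(1+‖ξ‖²)^{m/2} for some C and all ξ; (2) for every multi-index α with |α| ≥ 1 there is C_α such that |∂^α q(ξ)| ≤ C_α·q(ξ)·(1+‖ξ‖²)^{−δ|α|/2} for all ξ. -/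
open Real Set

section Aux

variable {E : Type*} [NormedAddCommGroup E] [InnerProductSpace ℝ E]

lemma aux_id_zero {i : ℕ} (hi : 2 ≤ i) (x : E) :
    ‖iteratedFDeriv ℝ i (fun y : E => y) x‖ = 0 := by
  obtain ⟨j, rfl⟩ : ∃ j, i = j + 1 := ⟨i - 1, by omega⟩
  rw [← norm_iteratedFDeriv_fderiv]
  have h : (fderiv ℝ (fun y : E => y)) = fun _ : E => (ContinuousLinearMap.id ℝ E) := by
    funext y; exact fderiv_id'
  rw [h, iteratedFDeriv_const_of_ne (by omega)]
  simp

lemma aux_id_one (x : E) : ‖iteratedFDeriv ℝ 1 (fun y : E => y) x‖ ≤ 1 := by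
  rw [show (1 : ℕ) = 0 + 1 from rfl, ← norm_iteratedFDeriv_fderiv]
  have h : (fderiv ℝ (fun y : E => y)) = fun _ : E => (ContinuousLinearMap.id ℝ E) := by
    funext y; exact fderiv_id'
  rw [h, norm_iteratedFDeriv_zero]
  exact ContinuousLinearMap.norm_id_le

lemma aux_normsq_bound (i : ℕ) (hi : 1 ≤ i) (x : E) :
    ‖iteratedFDeriv ℝ i (fun y : E => ‖y‖ ^ 2) x‖ ≤
      if i = 1 then 2 * ‖x‖ else if i = 2 then 2 else 0 := by
  have hfun : (fun y : E => ‖y‖ ^ 2) =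
      fun y : E => (innerSL ℝ (E := E)) ((fun z : E => z) y) ((fun z : E => z) y) := by
    funext y
    simp [real_inner_self_eq_norm_sq]
  rw [hfun]
  have h := (innerSL ℝ (E := E)).norm_iteratedFDeriv_le_of_bilinear
    (f := fun z : E => z) (g := fun z : E => z) (N := (i : WithTop ℕ∞))
    contDiff_id contDiff_id x le_rfl
  refine h.trans ?_
  have hsum_nonneg : (0:ℝ) ≤ ∑ j ∈ Finset.range (i + 1),
      (i.choose j : ℝ) * ‖iteratedFDeriv ℝ j (fun z : E => z) x‖ *
        ‖iteratedFDeriv ℝ (i - j) (fun z : E => z) x‖ :=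
    Finset.sum_nonneg fun j _ => by positivity
  refine le_trans (mul_le_of_le_one_left hsum_nonneg (norm_innerSL_le ℝ)) ?_
  have hcases : i = 1 ∨ i = 2 ∨ 3 ≤ i := by omega
  rcases hcases with rfl | rfl | h3
  · simp only [if_pos rfl]
    rw [Finset.sum_range_succ, Finset.sum_range_succ, Finset.sum_range_zero]
    have h0 : ‖iteratedFDeriv ℝ 0 (fun z : E => z) x‖ = ‖x‖ := norm_iteratedFDeriv_zero
    have h1 := aux_id_one x
    have h1' : (0:ℝ) ≤ ‖iteratedFDeriv ℝ 1 (fun z : E => z) x‖ := norm_nonneg _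
    norm_num [h0]
    have h1'' : ‖iteratedFDeriv ℝ (1 - 0) (fun z : E => z) x‖ ≤ 1 := h1
    have hid : ‖ContinuousLinearMap.id ℝ E‖ ≤ 1 := ContinuousLinearMap.norm_id_le
    nlinarith [mul_le_mul_of_nonneg_left h1'' (norm_nonneg x), norm_nonneg x, h1',
      mul_le_mul_of_nonneg_right hid (norm_nonneg x)]
  · simp only [if_neg (by omega : ¬ (2:ℕ) = 1), if_pos rfl]
    rw [Finset.sum_range_succ, Finset.sum_range_succ, Finset.sum_range_succ,
      Finset.sum_range_zero]
    have h0 : ‖iteratedFDeriv ℝ 0 (fun z : E => z) x‖ = ‖x‖ := norm_iteratedFDeriv_zero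
    have h2 : ‖iteratedFDeriv ℝ 2 (fun z : E => z) x‖ = 0 := aux_id_zero le_rfl x
    have h1 := aux_id_one x
    have h1' : (0:ℝ) ≤ ‖iteratedFDeriv ℝ 1 (fun z : E => z) x‖ := norm_nonneg _
    norm_num [h0, h2]
    have h1'' : ‖iteratedFDeriv ℝ (2 - 1) (fun z : E => z) x‖ ≤ 1 := h1
    have hid : ‖ContinuousLinearMap.id ℝ E‖ ≤ 1 := ContinuousLinearMap.norm_id_le
    nlinarith [mul_le_mul hid h1'' (norm_nonneg _) zero_le_one, h1']
  · simp only [if_neg (by omega : ¬ i = 1), if_neg (by omega : ¬ i = 2)]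
    refine le_of_eq (Finset.sum_eq_zero fun j hj => ?_)
    rcases le_or_gt 2 j with hj2 | hj2
    · rw [aux_id_zero hj2]; ring
    · rw [aux_id_zero (show 2 ≤ i - j by omega)]; ring

lemma weight_contDiff (m₀ : ℝ) (k : ℕ) :
    ContDiff ℝ k (fun y : E => (1 + ‖y‖ ^ 2) ^ (m₀ / 2)) := by
  refine contDiff_iff_contDiffAt.2 fun y => ?_
  exact (Real.contDiffAt_rpow_const_of_ne
    (by positivity : (1:ℝ) + ‖y‖ ^ 2 ≠ 0)).comp y
    ((contDiff_const.add (contDiff_norm_sq ℝ)).contDiffAt)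

lemma weight_bound (m₀ : ℝ) (k : ℕ) :
    ∃ C : ℝ, 0 ≤ C ∧ ∀ x : E,
      ‖iteratedFDeriv ℝ k (fun y : E => (1 + ‖y‖ ^ 2) ^ (m₀ / 2)) x‖ ≤
        C * (1 + ‖x‖ ^ 2) ^ ((m₀ - k) / 2) := by
  classical
  set φ : ℝ → ℝ := fun s => s ^ (m₀ / 2) with hφdef
  set C₀ : ℝ := ∑ i ∈ Finset.range (k + 1), ‖iteratedFDerivWithin ℝ i φ (Ioi (0:ℝ)) 1‖
    with hC₀def
  have hC₀ : 0 ≤ C₀ := Finset.sum_nonneg fun _ _ => norm_nonneg _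
  refine ⟨(Nat.factorial k : ℝ) * C₀ * 2 ^ k, by positivity, fun x => ?_⟩
  set t₀ : ℝ := 1 + ‖x‖ ^ 2 with ht₀def
  have ht₁ : (1:ℝ) ≤ t₀ := by nlinarith [sq_nonneg ‖x‖]
  have ht₀ : (0:ℝ) < t₀ := lt_of_lt_of_le one_pos ht₁
  set f : E → ℝ := fun y => (1 + ‖y‖ ^ 2) / t₀ with hfdef
  have hmap : ∀ y : E, f y ∈ Ioi (0:ℝ) := fun y => by
    simp only [hfdef, mem_Ioi]
    positivity
  have hfd : ContDiff ℝ k f := (contDiff_const.add (contDiff_norm_sq ℝ)).div_const t₀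
  have hφf : ContDiff ℝ k (fun y => φ (f y)) :=
    contDiff_iff_contDiffAt.2 fun y =>
      (Real.contDiffAt_rpow_const_of_ne (ne_of_gt (hmap y))).comp y hfd.contDiffAt
  have hne : (t₀ : ℝ) ^ (m₀ / 2) ≠ 0 := ne_of_gt (Real.rpow_pos_of_pos ht₀ _)
  have heq : (fun y : E => (1 + ‖y‖ ^ 2) ^ (m₀ / 2)) =
      fun y : E => (t₀ ^ (m₀ / 2)) • φ (f y) := by
    funext y
    have h1 : φ (f y) = (1 + ‖y‖ ^ 2) ^ (m₀ / 2) / t₀ ^ (m₀ / 2) := by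
      simp only [hφdef, hfdef]
      rw [Real.div_rpow (by positivity) ht₀.le]
    rw [h1, smul_eq_mul]
    field_simp
  -- bound the derivatives of f
  have hD : ∀ i : ℕ, 1 ≤ i → i ≤ k →
      ‖iteratedFDeriv ℝ i f x‖ ≤ (2 / Real.sqrt t₀) ^ i := by
    intro i hi hik
    have hf2 : f = fun y : E => t₀⁻¹ • ((fun _ : E => (1:ℝ)) y + (fun z : E => ‖z‖ ^ 2) y) := by
      funext y
      simp only [hfdef, smul_eq_mul]
      field_simp
    rw [hf2, iteratedFDeriv_const_smul_apply'
      ((contDiff_const.add (contDiff_norm_sq ℝ) : ContDiff ℝ i _)).contDiffAt]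
    refine le_trans (ContinuousMultilinearMap.opNorm_smul_le _ _) ?_
    rw [iteratedFDeriv_add_apply' contDiff_const.contDiffAt (contDiff_norm_sq ℝ).contDiffAt]
    have hconst : iteratedFDeriv ℝ i (fun _ : E => (1:ℝ)) x = 0 := by
      rw [iteratedFDeriv_const_of_ne (by omega)]; rfl
    rw [hconst, zero_add]
    have hbound := aux_normsq_bound i hi x
    have hsqrt_pos : 0 < Real.sqrt t₀ := Real.sqrt_pos.2 ht₀
    have hxle : ‖x‖ ≤ Real.sqrt t₀ := by
      rw [show ‖x‖ = Real.sqrt (‖x‖ ^ 2) by rw [Real.sqrt_sq (norm_nonneg x)]]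
      exact Real.sqrt_le_sqrt (by simp only [ht₀def]; nlinarith)
    have htsq : Real.sqrt t₀ * Real.sqrt t₀ = t₀ := Real.mul_self_sqrt ht₀.le
    have hcases : i = 1 ∨ i = 2 ∨ 3 ≤ i := by omega
    have habs : ‖(t₀⁻¹ : ℝ)‖ = t₀⁻¹ := by
      rw [Real.norm_eq_abs, abs_of_pos (by positivity)]
    rw [habs]
    rcases hcases with rfl | rfl | h3
    · rw [if_pos rfl] at hbound
      rw [pow_one]
      calc t₀⁻¹ * ‖iteratedFDeriv ℝ 1 (fun z : E => ‖z‖ ^ 2) x‖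
          ≤ t₀⁻¹ * (2 * ‖x‖) := by
            exact mul_le_mul_of_nonneg_left hbound (by positivity)
        _ ≤ 2 / Real.sqrt t₀ := by
            rw [div_eq_mul_inv]
            have : t₀⁻¹ = (Real.sqrt t₀)⁻¹ * (Real.sqrt t₀)⁻¹ := by
              rw [← mul_inv]; rw [htsq]
            rw [this]
            have h2 : 2 * ‖x‖ * (Real.sqrt t₀)⁻¹ ≤ 2 := by
              rw [mul_inv_le_iff₀ hsqrt_pos]
              nlinarith
            nlinarith [norm_nonneg x, inv_nonneg.2 hsqrt_pos.le]
    · rw [if_neg (by omega), if_pos rfl] at hbound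
      calc t₀⁻¹ * ‖iteratedFDeriv ℝ 2 (fun z : E => ‖z‖ ^ 2) x‖
          ≤ t₀⁻¹ * 2 := mul_le_mul_of_nonneg_left hbound (by positivity)
        _ ≤ (2 / Real.sqrt t₀) ^ 2 := by
            rw [div_pow, Real.sq_sqrt ht₀.le]
            rw [inv_eq_one_div]
            rw [div_mul_eq_mul_div, div_le_div_iff₀ ht₀ ht₀]
            nlinarith
    · rw [if_neg (by omega), if_neg (by omega)] at hbound
      have : ‖iteratedFDeriv ℝ i (fun z : E => ‖z‖ ^ 2) x‖ = 0 :=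
        le_antisymm hbound (norm_nonneg _)
      rw [this, mul_zero]
      positivity
  -- apply the composition bound
  have hfx : f x = 1 := by
    simp only [hfdef, ← ht₀def]
    exact div_self ht₀.ne'
  have hcomp : ‖iteratedFDeriv ℝ k (φ ∘ f) x‖ ≤ (Nat.factorial k : ℝ) * C₀ * (2 / Real.sqrt t₀) ^ k := by
    rw [← iteratedFDerivWithin_univ]
    refine norm_iteratedFDerivWithin_comp_le (t := Ioi (0:ℝ)) (s := univ)
      (N := (k : WithTop ℕ∞))
      (fun s hs => (Real.contDiffAt_rpow_const_of_ne (ne_of_gt hs)).contDiffWithinAt)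
      hfd.contDiffOn le_rfl (uniqueDiffOn_Ioi 0) uniqueDiffOn_univ
      (fun y _ => hmap y) (mem_univ x) (fun i hik => ?_) (fun i hi hik => ?_)
    · rw [hfx]
      exact Finset.single_le_sum (f := fun j => ‖iteratedFDerivWithin ℝ j φ (Ioi (0:ℝ)) 1‖)
        (fun j _ => norm_nonneg _) (Finset.mem_range.2 (by omega))
    · rw [iteratedFDerivWithin_univ]
      exact hD i hi hik
  -- put everything together
  have hsqrtk : (Real.sqrt t₀) ^ k = t₀ ^ ((k : ℝ) / 2) := by
    rw [Real.sqrt_eq_rpow, ← Real.rpow_natCast (t₀ ^ ((1:ℝ)/2)) k, ← Real.rpow_mul ht₀.le]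
    ring_nf
  have hnorm : ‖iteratedFDeriv ℝ k (fun y : E => (1 + ‖y‖ ^ 2) ^ (m₀ / 2)) x‖ ≤
      t₀ ^ (m₀ / 2) * ‖iteratedFDeriv ℝ k (φ ∘ f) x‖ := by
    rw [heq, iteratedFDeriv_const_smul_apply' hφf.contDiffAt]
    refine le_trans (ContinuousMultilinearMap.opNorm_smul_le _ _) ?_
    rw [Real.norm_eq_abs, abs_of_pos (Real.rpow_pos_of_pos ht₀ _)]
    exact le_rfl
  refine hnorm.trans ?_
  have hfinal : t₀ ^ (m₀ / 2) * ((Nat.factorial k : ℝ) * C₀ * (2 / Real.sqrt t₀) ^ k) =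
      (Nat.factorial k : ℝ) * C₀ * 2 ^ k * t₀ ^ ((m₀ - k) / 2) := by
    rw [div_pow, hsqrtk]
    rw [show (m₀ - k) / 2 = m₀ / 2 - (k : ℝ) / 2 by ring, Real.rpow_sub ht₀]
    field_simp
  calc t₀ ^ (m₀ / 2) * ‖iteratedFDeriv ℝ k (φ ∘ f) x‖
      ≤ t₀ ^ (m₀ / 2) * ((Nat.factorial k : ℝ) * C₀ * (2 / Real.sqrt t₀) ^ k) :=
        mul_le_mul_of_nonneg_left hcomp (Real.rpow_pos_of_pos ht₀ _).le
    _ = (Nat.factorial k : ℝ) * C₀ * 2 ^ k * t₀ ^ ((m₀ - k) / 2) := hfinal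

end Aux

theorem stmt10 {n : ℕ} (ρ m m₀ : ℝ) (hρ : 1 / 2 < ρ) (hρ1 : ρ ≤ 1)
    (hm₀ : m₀ < m) (hδ : 0 < ρ - (m - m₀))
    (p : EuclideanSpace ℝ (Fin n) → ℝ) (hp : ContDiff ℝ (⊤ : ℕ∞) p)
    (hpS : ∀ k : ℕ, ∃ C : ℝ, ∀ ξ,
      ‖iteratedFDeriv ℝ k p ξ‖ ≤ C * (1 + ‖ξ‖ ^ 2) ^ ((m - ρ * k) / 2))
    (hpos : ∀ ξ, 0 ≤ p ξ) :
    (∃ C : ℝ, ∀ ξ : EuclideanSpace ℝ (Fin n),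
      (1 + ‖ξ‖ ^ 2) ^ (m₀ / 2) ≤ p ξ + (1 + ‖ξ‖ ^ 2) ^ (m₀ / 2) ∧
      p ξ + (1 + ‖ξ‖ ^ 2) ^ (m₀ / 2) ≤ C * (1 + ‖ξ‖ ^ 2) ^ (m / 2)) ∧
    (∀ k : ℕ, 1 ≤ k → ∃ C : ℝ, ∀ ξ : EuclideanSpace ℝ (Fin n),
      ‖iteratedFDeriv ℝ k
          (fun x : EuclideanSpace ℝ (Fin n) => p x + (1 + ‖x‖ ^ 2) ^ (m₀ / 2)) ξ‖
        ≤ C * (p ξ + (1 + ‖ξ‖ ^ 2) ^ (m₀ / 2)) *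
            (1 + ‖ξ‖ ^ 2) ^ (-((ρ - (m - m₀)) * k) / 2)) := by
  constructor
  · -- part 1
    obtain ⟨C₀, hC₀⟩ := hpS 0
    refine ⟨C₀ + 1, fun ξ => ?_⟩
    have ht₁ : (1:ℝ) ≤ 1 + ‖ξ‖ ^ 2 := by nlinarith [sq_nonneg ‖ξ‖]
    have ht₀ : (0:ℝ) < 1 + ‖ξ‖ ^ 2 := lt_of_lt_of_le one_pos ht₁
    have h0 := hC₀ ξ
    rw [norm_iteratedFDeriv_zero, Real.norm_eq_abs, abs_of_nonneg (hpos ξ)] at h0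
    have hexp : (m - ρ * (0:ℕ)) / 2 = m / 2 := by norm_num
    rw [hexp] at h0
    have hle : (1 + ‖ξ‖ ^ 2) ^ (m₀ / 2) ≤ (1 + ‖ξ‖ ^ 2) ^ (m / 2) :=
      Real.rpow_le_rpow_of_exponent_le ht₁ (by linarith)
    exact ⟨le_add_of_nonneg_left (hpos ξ), by nlinarith⟩
  · -- part 2
    intro k hk
    obtain ⟨C₁, hC₁⟩ := hpS k
    obtain ⟨C₂, hC₂nn, hC₂⟩ := weight_bound (E := EuclideanSpace ℝ (Fin n)) m₀ k
    have hC₁nn : 0 ≤ C₁ := by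
      have := hC₁ 0
      have h1 : (1:ℝ) + ‖(0 : EuclideanSpace ℝ (Fin n))‖ ^ 2 = 1 := by simp
      rw [h1, Real.one_rpow] at this
      nlinarith [norm_nonneg (iteratedFDeriv ℝ k p (0 : EuclideanSpace ℝ (Fin n)))]
    refine ⟨C₁ + C₂, fun ξ => ?_⟩
    have ht₁ : (1:ℝ) ≤ 1 + ‖ξ‖ ^ 2 := by nlinarith [sq_nonneg ‖ξ‖]
    have ht₀ : (0:ℝ) < 1 + ‖ξ‖ ^ 2 := lt_of_lt_of_le one_pos ht₁
    have hk' : (1:ℝ) ≤ (k:ℝ) := by exact_mod_cast hk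
    set t : ℝ := 1 + ‖ξ‖ ^ 2 with htdef
    have hadd : iteratedFDeriv ℝ k
        (fun x : EuclideanSpace ℝ (Fin n) => p x + (1 + ‖x‖ ^ 2) ^ (m₀ / 2)) ξ =
        iteratedFDeriv ℝ k p ξ +
          iteratedFDeriv ℝ k (fun x : EuclideanSpace ℝ (Fin n) => (1 + ‖x‖ ^ 2) ^ (m₀ / 2)) ξ :=
      iteratedFDeriv_add_apply' (hp.of_le (by exact_mod_cast le_top)).contDiffAt (weight_contDiff m₀ k).contDiffAt
    rw [hadd]
    set e : ℝ := m₀ / 2 + (-((ρ - (m - m₀)) * k)) / 2 with hedef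
    have he1 : (m - ρ * k) / 2 ≤ e := by
      rw [hedef]
      have : m - m₀ ≤ (m - m₀) * k := by nlinarith
      nlinarith
    have he2 : (m₀ - k) / 2 ≤ e := by
      rw [hedef]
      nlinarith
    have h1 : ‖iteratedFDeriv ℝ k p ξ‖ ≤ C₁ * t ^ e :=
      (hC₁ ξ).trans (mul_le_mul_of_nonneg_left
        (Real.rpow_le_rpow_of_exponent_le ht₁ he1) hC₁nn)
    have h2 : ‖iteratedFDeriv ℝ k
        (fun x : EuclideanSpace ℝ (Fin n) => (1 + ‖x‖ ^ 2) ^ (m₀ / 2)) ξ‖ ≤ C₂ * t ^ e :=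
      (hC₂ ξ).trans (mul_le_mul_of_nonneg_left
        (Real.rpow_le_rpow_of_exponent_le ht₁ he2) hC₂nn)
    have hte : t ^ e = t ^ (m₀ / 2) * t ^ ((-((ρ - (m - m₀)) * k)) / 2) :=
      Real.rpow_add ht₀ _ _
    have hq : t ^ (m₀ / 2) ≤ p ξ + t ^ (m₀ / 2) := le_add_of_nonneg_left (hpos ξ)
    have hrp : (0:ℝ) < t ^ ((-((ρ - (m - m₀)) * k)) / 2) := Real.rpow_pos_of_pos ht₀ _
    calc ‖iteratedFDeriv ℝ k p ξ +
          iteratedFDeriv ℝ k (fun x : EuclideanSpace ℝ (Fin n) => (1 + ‖x‖ ^ 2) ^ (m₀ / 2)) ξ‖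
        ≤ ‖iteratedFDeriv ℝ k p ξ‖ + ‖iteratedFDeriv ℝ k
            (fun x : EuclideanSpace ℝ (Fin n) => (1 + ‖x‖ ^ 2) ^ (m₀ / 2)) ξ‖ := norm_add_le _ _
      _ ≤ (C₁ + C₂) * t ^ e := by linarith
      _ = (C₁ + C₂) * t ^ (m₀ / 2) * t ^ ((-((ρ - (m - m₀)) * k)) / 2) := by
          rw [hte]; ring
      _ ≤ (C₁ + C₂) * (p ξ + t ^ (m₀ / 2)) * t ^ ((-((ρ - (m - m₀)) * k)) / 2) := by
          have hcc : 0 ≤ C₁ + C₂ := by linarith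
          exact mul_le_mul_of_nonneg_right (mul_le_mul_of_nonneg_left hq hcc) hrp.le
end

section
/- Let δ > 0 and let q : ℝⁿ → ℝ be smooth with q(ξ) > 0 for all ξ, such that for every multi-index α there is C_α with |∂^α q(ξ)| ≤ C_α·q(ξ)·(1+‖ξ‖²)^{−δ|α|/2}. Then the function √q satisfies the same type of estimates: for every multi-index α there is C′_α with |∂^α √q(ξ)| ≤ C′_α·√q(ξ)·(1+‖ξ‖²)^{−δ|α|/2}. -/
open Real Finset

theorem stmt11 {n : ℕ} (δ : ℝ) (hδ : 0 < δ)
    (q : EuclideanSpace ℝ (Fin n) → ℝ) (hq : ContDiff ℝ (⊤ : ℕ∞) q)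
    (hpos : ∀ ξ, 0 < q ξ)
    (hest : ∀ k : ℕ, ∃ C : ℝ, ∀ ξ,
      ‖iteratedFDeriv ℝ k q ξ‖ ≤ C * q ξ * (1 + ‖ξ‖ ^ 2) ^ (-(δ * k) / 2)) :
    ∀ k : ℕ, ∃ C' : ℝ, ∀ ξ : EuclideanSpace ℝ (Fin n),
      ‖iteratedFDeriv ℝ k (fun x => Real.sqrt (q x)) ξ‖
        ≤ C' * Real.sqrt (q ξ) * (1 + ‖ξ‖ ^ 2) ^ (-(δ * k) / 2) := by
  have hw : ∀ ξ : EuclideanSpace ℝ (Fin n), (0:ℝ) < 1 + ‖ξ‖ ^ 2 := fun ξ => by positivity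
  have hsm : ∀ s : ℝ, ContDiff ℝ (⊤ : ℕ∞) (fun x => q x ^ s) := by
    intro s
    rw [contDiff_iff_contDiffAt]
    intro x
    exact (Real.contDiffAt_rpow_const_of_ne (hpos x).ne').comp x hq.contDiffAt
  have hfd : ∀ s : ℝ, ∀ x, fderiv ℝ (fun y => q y ^ s) x
      = (s * q x ^ (s-1)) • fderiv ℝ q x := fun s x =>
    (((hq.differentiable (by simp) x).hasFDerivAt).rpow_const (Or.inl (hpos x).ne')).fderiv
  choose Cq hCq using hest
  have hCq' : ∀ k ξ, ‖iteratedFDeriv ℝ k q ξ‖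
      ≤ max (Cq k) 0 * q ξ * (1 + ‖ξ‖^2) ^ (-(δ*(k:ℕ))/2) := by
    intro k ξ
    refine (hCq k ξ).trans ?_
    have h1 : (0:ℝ) ≤ q ξ * (1+‖ξ‖^2)^(-(δ*(k:ℕ))/2) :=
      mul_nonneg (hpos ξ).le (Real.rpow_nonneg (by positivity) _)
    nlinarith [le_max_left (Cq k) (0:ℝ)]
  have main : ∀ k : ℕ, ∀ s : ℝ, ∃ C : ℝ, ∀ ξ,
      ‖iteratedFDeriv ℝ k (fun x => q x ^ s) ξ‖
        ≤ C * q ξ ^ s * (1 + ‖ξ‖ ^ 2) ^ (-(δ * k) / 2) := by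
    intro k
    induction k using Nat.strong_induction_on with
    | _ k ih =>
      match k with
      | 0 =>
        intro s
        refine ⟨1, fun ξ => ?_⟩
        simp only [norm_iteratedFDeriv_zero, Real.norm_eq_abs, Nat.cast_zero, mul_zero,
          neg_zero, zero_div, Real.rpow_zero, mul_one, one_mul]
        exact le_of_eq (abs_of_pos (Real.rpow_pos_of_pos (hpos ξ) s))
      | (m+1) =>
        intro s
        have hAe : ∀ i : ℕ, i ≤ m → ∃ C, ∀ ξ,
            ‖iteratedFDeriv ℝ i (fun x => q x ^ (s-1)) ξ‖
              ≤ C * q ξ ^ (s-1) * (1+‖ξ‖^2) ^ (-(δ*(i:ℕ))/2) :=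
          fun i hi => ih i (Nat.lt_succ_of_le hi) (s-1)
        choose A hA using hAe
        set B : ℕ → ℝ := fun i => if h : i ≤ m then max (A i h) 0 else 0 with hBdef
        have hB0 : ∀ i, 0 ≤ B i := by
          intro i
          rw [hBdef]
          dsimp only
          split <;> simp [le_max_right]
        have hB : ∀ i, i ≤ m → ∀ ξ,
            ‖iteratedFDeriv ℝ i (fun x => q x ^ (s-1)) ξ‖
              ≤ B i * q ξ ^ (s-1) * (1+‖ξ‖^2) ^ (-(δ*(i:ℕ))/2) := by
          intro i h ξ
          refine (hA i h ξ).trans ?_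
          have h1 : (0:ℝ) ≤ q ξ ^ (s-1) * (1+‖ξ‖^2)^(-(δ*(i:ℕ))/2) :=
            mul_nonneg (Real.rpow_nonneg (hpos ξ).le _) (Real.rpow_nonneg (by positivity) _)
          have h2 : A i h ≤ B i := by simp [hBdef, h, le_max_left]
          nlinarith
        refine ⟨∑ i ∈ Finset.range (m+1),
            (m.choose i : ℝ) * (|s| * B i) * (max (Cq (m+1-i)) 0), fun ξ => ?_⟩
        have e1 : ‖iteratedFDeriv ℝ (m+1) (fun x => q x ^ s) ξ‖
            = ‖iteratedFDeriv ℝ m (fderiv ℝ (fun x => q x ^ s)) ξ‖ :=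
          norm_iteratedFDeriv_fderiv.symm
        have e2 : fderiv ℝ (fun x => q x ^ s)
            = fun x => (s * q x ^ (s-1)) • fderiv ℝ q x := funext (hfd s)
        have hsmul := norm_iteratedFDeriv_smul_le
          (𝕜 := ℝ) (f := fun x => s * q x ^ (s-1)) (g := fderiv ℝ q)
          ((hsm (s-1)).const_smul s) (hq.fderiv_right (by simp)) ξ (n := m) (by exact_mod_cast le_top)
        have hterm : ∀ i ∈ Finset.range (m+1),
            (m.choose i : ℝ) * ‖iteratedFDeriv ℝ i (fun x => s * q x ^ (s-1)) ξ‖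
                * ‖iteratedFDeriv ℝ (m-i) (fderiv ℝ q) ξ‖
            ≤ (m.choose i : ℝ) * (|s| * B i) * (max (Cq (m+1-i)) 0)
                * (q ξ ^ s * (1 + ‖ξ‖ ^ 2) ^ (-(δ * ((m:ℝ)+1)) / 2)) := by
          intro i hi
          rw [Finset.mem_range] at hi
          have him : i ≤ m := Nat.lt_succ_iff.mp hi
          have t1 : ‖iteratedFDeriv ℝ i (fun x => s * q x ^ (s-1)) ξ‖
              ≤ |s| * (B i * q ξ ^ (s-1) * (1+‖ξ‖^2) ^ (-(δ*(i:ℕ))/2)) := by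
            have heq : (fun x => s * q x ^ (s-1)) = s • (fun x => q x ^ (s-1)) := rfl
            rw [heq, iteratedFDeriv_const_smul_apply ((hsm (s-1)).of_le (by exact_mod_cast le_top)).contDiffAt,
              norm_smul, Real.norm_eq_abs]
            exact mul_le_mul_of_nonneg_left (hB i him ξ) (abs_nonneg s)
          have t2 : ‖iteratedFDeriv ℝ (m-i) (fderiv ℝ q) ξ‖
              ≤ max (Cq (m+1-i)) 0 * q ξ * (1+‖ξ‖^2) ^ (-(δ*((m+1-i:ℕ):ℝ))/2) := by
            rw [norm_iteratedFDeriv_fderiv, show m - i + 1 = m + 1 - i by omega]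
            exact hCq' (m+1-i) ξ
          have hq1 : q ξ ^ (s-1) * q ξ = q ξ ^ s := by
            rw [Real.rpow_sub_one (hpos ξ).ne', div_mul_cancel₀ _ (hpos ξ).ne']
          have hww : (1+‖ξ‖^2) ^ (-(δ*(i:ℕ))/2) * (1+‖ξ‖^2) ^ (-(δ*((m+1-i:ℕ):ℝ))/2)
              = (1+‖ξ‖^2) ^ (-(δ * ((m:ℝ)+1)) / 2) := by
            rw [← Real.rpow_add (hw ξ)]
            congr 1
            have hc : ((m+1-i:ℕ):ℝ) = (m:ℝ) + 1 - (i:ℝ) := by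
              push_cast [Nat.cast_sub (by omega : i ≤ m + 1)]; ring
            rw [hc]; ring
          calc (m.choose i : ℝ) * ‖iteratedFDeriv ℝ i (fun x => s * q x ^ (s-1)) ξ‖
              * ‖iteratedFDeriv ℝ (m-i) (fderiv ℝ q) ξ‖
              ≤ (m.choose i : ℝ) * (|s| * (B i * q ξ ^ (s-1) * (1+‖ξ‖^2) ^ (-(δ*(i:ℕ))/2)))
                * (max (Cq (m+1-i)) 0 * q ξ * (1+‖ξ‖^2) ^ (-(δ*((m+1-i:ℕ):ℝ))/2)) := by
                have hX' : (0:ℝ) ≤ (m.choose i : ℝ)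
                    * (|s| * (B i * q ξ ^ (s-1) * (1+‖ξ‖^2) ^ (-(δ*(i:ℕ))/2))) :=
                  mul_nonneg (Nat.cast_nonneg _) (mul_nonneg (abs_nonneg s)
                    (mul_nonneg (mul_nonneg (hB0 i) (Real.rpow_nonneg (hpos ξ).le _))
                      (Real.rpow_nonneg (by positivity) _)))
                exact mul_le_mul (mul_le_mul_of_nonneg_left t1 (Nat.cast_nonneg _)) t2
                  (norm_nonneg _) hX'
            _ = (m.choose i : ℝ) * (|s| * B i) * (max (Cq (m+1-i)) 0)
                * (q ξ ^ s * (1 + ‖ξ‖ ^ 2) ^ (-(δ * ((m:ℝ)+1)) / 2)) := by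
                rw [← hq1, ← hww]; ring
        calc ‖iteratedFDeriv ℝ (m+1) (fun x => q x ^ s) ξ‖
            = ‖iteratedFDeriv ℝ m (fun x => (s * q x ^ (s-1)) • fderiv ℝ q x) ξ‖ := by
              rw [e1, e2]
          _ ≤ ∑ i ∈ Finset.range (m+1),
              (m.choose i : ℝ) * ‖iteratedFDeriv ℝ i (fun x => s * q x ^ (s-1)) ξ‖
                * ‖iteratedFDeriv ℝ (m-i) (fderiv ℝ q) ξ‖ := hsmul
          _ ≤ ∑ i ∈ Finset.range (m+1),
              (m.choose i : ℝ) * (|s| * B i) * (max (Cq (m+1-i)) 0)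
                * (q ξ ^ s * (1 + ‖ξ‖ ^ 2) ^ (-(δ * ((m:ℝ)+1)) / 2)) :=
              Finset.sum_le_sum hterm
          _ = (∑ i ∈ Finset.range (m+1),
              (m.choose i : ℝ) * (|s| * B i) * (max (Cq (m+1-i)) 0))
                * q ξ ^ s * (1 + ‖ξ‖ ^ 2) ^ (-(δ * ((m:ℝ)+1)) / 2) := by
              rw [← Finset.sum_mul]; ring
          _ = _ := by
              push_cast; ring_nf
              conv_lhs => rw [mul_assoc, mul_comm]
              congr 1
              exact Finset.sum_congr rfl fun x _ => by ring
  intro k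
  obtain ⟨C, hC⟩ := main k (1/2)
  refine ⟨C, fun ξ => ?_⟩
  simpa [Real.sqrt_eq_rpow] using hC ξ
end

section
/- Let X : ℝⁿ∖{0} → ℝⁿ be a locally Lipschitz vector field that is positively homogeneous of degree d (i.e. X(tξ) = t^d X(ξ) for all t > 0, ξ ≠ 0). Suppose X(ξ₀) = c·ξ₀ for some ξ₀ ≠ 0 and c ∈ ℝ. Then any integral curve γ of X with γ(0) = ξ₀ satisfies γ(t) ∈ { r·ξ₀ : r > 0 } for all t in its interval of definition. -/
open Real Filter Set

local notation "⟪" x ", " y "⟫" => @inner ℝ _ _ x y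

lemma exists_local_radial_sol (c d : ℝ) (r₀ : ℝ) (hr : 0 < r₀) (m : ℝ) :
    ∃ ρ : ℝ → ℝ, ρ m = r₀ ∧ ∀ᶠ t in nhds m, 0 < ρ t ∧ HasDerivAt ρ (c * ρ t ^ d) t := by
  by_cases hd : d = 1
  · refine ⟨fun t => r₀ * Real.exp (c * (t - m)), by simp, ?_⟩
    filter_upwards with t
    refine ⟨by positivity, ?_⟩
    subst hd
    rw [Real.rpow_one]
    have h1 : HasDerivAt (fun t : ℝ => c * (t - m)) c t := by
      simpa using ((hasDerivAt_id t).sub_const m).const_mul c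
    have := (h1.exp).const_mul r₀
    exact this.congr_deriv (by beta_reduce; ring)
  · have h1d : (1 : ℝ) - d ≠ 0 := sub_ne_zero.mpr (Ne.symm hd)
    set e : ℝ := 1 / (1 - d) with he_def
    have he : (1 - d) * e = 1 := mul_one_div_cancel h1d
    set B : ℝ → ℝ := fun t => r₀ ^ ((1:ℝ) - d) + c * (1 - d) * (t - m) with hB_def
    have hBm : B m = r₀ ^ ((1:ℝ) - d) := by simp [hB_def]
    have hBmpos : 0 < B m := by rw [hBm]; exact Real.rpow_pos_of_pos hr _
    have hBcont : Continuous B := by fun_prop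
    refine ⟨fun t => B t ^ e, ?_, ?_⟩
    · show B m ^ e = r₀
      rw [hBm, ← Real.rpow_mul hr.le, he, Real.rpow_one]
    · have hev : ∀ᶠ t in nhds m, 0 < B t :=
        hBcont.continuousAt.eventually_mem (isOpen_Ioi.mem_nhds hBmpos)
      filter_upwards [hev] with t ht
      refine ⟨Real.rpow_pos_of_pos ht _, ?_⟩
      have hB' : HasDerivAt B (c * (1 - d)) t := by
        simpa [hB_def] using (((hasDerivAt_id t).sub_const m).const_mul (c * (1 - d))).const_add
          (r₀ ^ ((1:ℝ) - d))
      have hder := hB'.rpow_const (p := e) (Or.inl ht.ne')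
      have he2 : e - 1 = e * d := by
        rw [he_def]; field_simp; ring
      have heq : c * (1 - d) * e * B t ^ (e - 1) = c * (B t ^ e) ^ d := by
        rw [← Real.rpow_mul ht.le, ← he2,
          show c * (1 - d) * e = c by rw [mul_assoc, he, mul_one]]
      rw [← heq]
      exact hder

lemma key_march {n : ℕ} (X : EuclideanSpace ℝ (Fin n) → EuclideanSpace ℝ (Fin n))
    (hlip : ∀ x : EuclideanSpace ℝ (Fin n), x ≠ 0 →
      ∃ s ∈ nhds x, ∃ K : NNReal, LipschitzOnWith K X s)
    (d : ℝ)
    (hhom : ∀ t : ℝ, 0 < t → ∀ ξ : EuclideanSpace ℝ (Fin n), ξ ≠ 0 →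
      X (t • ξ) = (t ^ d) • X ξ)
    (ξ₀ : EuclideanSpace ℝ (Fin n)) (hξ₀ : ξ₀ ≠ 0) (c : ℝ) (hrad : X ξ₀ = c • ξ₀)
    (b : ℝ) (hb : 0 ≤ b)
    (γ : ℝ → EuclideanSpace ℝ (Fin n)) (hγ0 : γ 0 = ξ₀)
    (hγne : ∀ t ∈ Set.Icc 0 b, γ t ≠ 0)
    (hγ : ∀ t ∈ Set.Icc 0 b, HasDerivAt γ (X (γ t)) t) :
    ∃ r : ℝ, 0 < r ∧ γ b = r • ξ₀ := by
  set P : ℝ → Prop := fun τ => ∃ r : ℝ, 0 < r ∧ γ τ = r • ξ₀ with hP_def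
  have hP0 : P 0 := ⟨1, one_pos, by simp [hγ0]⟩
  set S : Set ℝ := {u | u ∈ Icc 0 b ∧ ∀ τ ∈ Icc 0 u, P τ} with hS_def
  have h0S : (0 : ℝ) ∈ S := by
    refine ⟨⟨le_refl 0, hb⟩, fun τ hτ => ?_⟩
    rw [le_antisymm hτ.2 hτ.1]
    exact hP0
  have hbdd : BddAbove S := ⟨b, fun u hu => hu.1.2⟩
  set m : ℝ := sSup S with hm_def
  have hm0 : 0 ≤ m := le_csSup hbdd h0S
  have hmb : m ≤ b := csSup_le ⟨0, h0S⟩ fun u hu => hu.1.2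
  have hmI : m ∈ Icc (0:ℝ) b := ⟨hm0, hmb⟩
  have hlt : ∀ τ, 0 ≤ τ → τ < m → P τ := by
    intro τ h0τ hτ
    obtain ⟨u, hu, hτu⟩ := exists_lt_of_lt_csSup ⟨0, h0S⟩ hτ
    exact hu.2 τ ⟨h0τ, hτu.le⟩
  -- the coefficient function
  have hnorm : (‖ξ₀‖ ^ 2 : ℝ) ≠ 0 := (pow_pos (norm_pos_iff.mpr hξ₀) 2).ne'
  set R : ℝ → ℝ := fun τ => ⟪γ τ, ξ₀⟫ / ‖ξ₀‖ ^ 2 with hR_def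
  have hRval : ∀ τ (r : ℝ), γ τ = r • ξ₀ → R τ = r := by
    intro τ r h
    rw [hR_def]
    simp only [h, real_inner_smul_left, real_inner_self_eq_norm_sq]
    field_simp
  -- Step 2 : P m
  have hPm : P m := by
    rcases eq_or_lt_of_le hm0 with h | hm_pos
    · rw [← h]; exact hP0
    · have hγcont : ContinuousAt γ m := (hγ m hmI).continuousAt
      have hRcont : ContinuousAt R m :=
        (((continuous_id.inner continuous_const).continuousAt.comp hγcont).div_const _)
      set F : ℝ → EuclideanSpace ℝ (Fin n) := fun τ => γ τ - R τ • ξ₀ with hF_def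
      have hFcont : ContinuousAt F m := hγcont.sub (hRcont.smul continuousAt_const)
      have hNe : (nhdsWithin m (Ico (0:ℝ) m)).NeBot := by
        refine mem_closure_iff_nhdsWithin_neBot.mp ?_
        rw [closure_Ico hm_pos.ne]
        exact ⟨hm0, le_refl m⟩
      have hEq : ∀ τ ∈ Ico (0:ℝ) m, F τ = 0 := by
        intro τ hτ
        obtain ⟨r, hr, hγτ⟩ := hlt τ hτ.1 hτ.2
        rw [hF_def]
        simp only [hRval τ r hγτ, hγτ, sub_self]
      have h1 : Tendsto F (nhdsWithin m (Ico 0 m)) (nhds (F m)) :=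
        hFcont.continuousWithinAt
      have h2 : Tendsto F (nhdsWithin m (Ico 0 m)) (nhds 0) := by
        refine Tendsto.congr' ?_ tendsto_const_nhds
        exact eventually_mem_nhdsWithin.mono fun τ hτ => (hEq τ hτ).symm
      have hF0 : F m = 0 := tendsto_nhds_unique h1 h2
      have hγm : γ m = R m • ξ₀ := by
        have := sub_eq_zero.mp hF0
        exact this
      have hRm_nonneg : 0 ≤ R m := by
        refine ge_of_tendsto (hRcont.continuousWithinAt (s := Ico 0 m)) ?_
        refine eventually_mem_nhdsWithin.mono fun τ hτ => ?_
        obtain ⟨r, hr, hγτ⟩ := hlt τ hτ.1 hτ.2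
        rw [hRval τ r hγτ]
        exact hr.le
      have hRm_ne : R m ≠ 0 := by
        intro h
        apply hγne m hmI
        rw [hγm, h, zero_smul]
      exact ⟨R m, lt_of_le_of_ne hRm_nonneg (Ne.symm hRm_ne), hγm⟩
  -- Step 3 : m = b
  have hmeq : m = b := by
    by_contra hne
    have hmb' : m < b := lt_of_le_of_ne hmb hne
    obtain ⟨s, hs_nhds, K, hK⟩ := hlip (γ m) (hγne m hmI)
    obtain ⟨r₀, hr₀, hγm⟩ := hPm
    obtain ⟨ρ, hρm, hρev⟩ := exists_local_radial_sol c d r₀ hr₀ m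
    have hγcont : ContinuousAt γ m := (hγ m hmI).continuousAt
    have hγmem : ∀ᶠ t in nhds m, γ t ∈ s := hγcont.eventually_mem hs_nhds
    have hρcont : ContinuousAt ρ m := (hρev.self_of_nhds).2.continuousAt
    have hgval : ρ m • ξ₀ = γ m := by rw [hρm, hγm]
    have hgcont : ContinuousAt (fun t => ρ t • ξ₀) m := hρcont.smul continuousAt_const
    have hgmem : ∀ᶠ t in nhds m, ρ t • ξ₀ ∈ s :=
      hgcont.eventually_mem (by rw [hgval]; exact hs_nhds)
    have hall := hρev.and (hγmem.and hgmem)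
    obtain ⟨ε, hε, hball⟩ := Metric.eventually_nhds_iff_ball.mp hall
    set δ : ℝ := min (ε / 2) (b - m) with hδ_def
    have hδpos : 0 < δ := lt_min (half_pos hε) (sub_pos.mpr hmb')
    have hsub : Icc m (m + δ) ⊆ Metric.ball m ε := by
      intro t ht
      rw [Metric.mem_ball, Real.dist_eq, abs_of_nonneg (sub_nonneg.mpr ht.1)]
      have : t - m ≤ δ := by linarith [ht.2]
      have : δ < ε := lt_of_le_of_lt (min_le_left _ _) (by linarith)
      linarith [ht.2, min_le_left (ε/2) (b-m)]
    have hsub2 : Icc m (m + δ) ⊆ Icc 0 b := by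
      intro t ht
      constructor
      · linarith [ht.1]
      · have := min_le_right (ε/2) (b-m)
        have h2 : m + δ ≤ b := by rw [hδ_def] at *; linarith
        linarith [ht.2]
    -- apply uniqueness
    have huniq : EqOn γ (fun t => ρ t • ξ₀) (Icc m (m + δ)) := by
      refine ODE_solution_unique_of_mem_Icc_right (v := fun _ => X) (s := fun _ => s)
        (K := K) (fun _ _ => hK) ?_ ?_ ?_ ?_ ?_ ?_ ?_
      · exact fun t ht => (hγ t (hsub2 ht)).continuousAt.continuousWithinAt
      · exact fun t ht => (hγ t (hsub2 (Ico_subset_Icc_self ht))).hasDerivWithinAt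
      · exact fun t ht => (hball t (hsub (Ico_subset_Icc_self ht))).2.1
      · intro t ht
        exact ((hball t (hsub ht)).1.2).continuousAt.smul
          (continuousAt_const (y := ξ₀)) |>.continuousWithinAt
      · intro t ht
        obtain ⟨⟨hρpos, hρder⟩, _, _⟩ := hball t (hsub (Ico_subset_Icc_self ht))
        have hder : HasDerivAt (fun t => ρ t • ξ₀) ((c * ρ t ^ d) • ξ₀) t :=
          hρder.smul_const ξ₀
        have hXg : X (ρ t • ξ₀) = (c * ρ t ^ d) • ξ₀ := by
          rw [hhom (ρ t) hρpos ξ₀ hξ₀, hrad, smul_smul, mul_comm]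
        show HasDerivWithinAt (fun t => ρ t • ξ₀) (X (ρ t • ξ₀)) (Ici t) t
        rw [hXg]
        exact hder.hasDerivWithinAt
      · exact fun t ht => (hball t (hsub (Ico_subset_Icc_self ht))).2.2
      · rw [hgval]
    -- m + δ ∈ S, contradiction
    have hmem : m + δ ∈ S := by
      refine ⟨⟨by linarith, by
        have := min_le_right (ε/2) (b-m); rw [hδ_def]; linarith⟩, fun τ hτ => ?_⟩
      rcases lt_or_ge τ m with h | h
      · exact hlt τ hτ.1 h
      · rcases eq_or_lt_of_le h with h' | h'
        · rw [← h']; exact ⟨r₀, hr₀, hγm⟩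
        · refine ⟨ρ τ, (hball τ (hsub ⟨h, hτ.2⟩)).1.1, huniq ⟨h, hτ.2⟩⟩
    have := le_csSup hbdd hmem
    linarith
  rw [← hmeq]
  exact hPm

theorem stmt15 {n : ℕ} (X : EuclideanSpace ℝ (Fin n) → EuclideanSpace ℝ (Fin n))
    (hlip : ∀ x : EuclideanSpace ℝ (Fin n), x ≠ 0 →
      ∃ s ∈ nhds x, ∃ K : NNReal, LipschitzOnWith K X s)
    (d : ℝ)
    (hhom : ∀ t : ℝ, 0 < t → ∀ ξ : EuclideanSpace ℝ (Fin n), ξ ≠ 0 →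
      X (t • ξ) = (t ^ d) • X ξ)
    (ξ₀ : EuclideanSpace ℝ (Fin n)) (hξ₀ : ξ₀ ≠ 0) (c : ℝ) (hrad : X ξ₀ = c • ξ₀)
    (I : Set ℝ) (hI : Convex ℝ I) (h0 : (0 : ℝ) ∈ I)
    (γ : ℝ → EuclideanSpace ℝ (Fin n)) (hγ0 : γ 0 = ξ₀)
    (hγne : ∀ t ∈ I, γ t ≠ 0)
    (hγ : ∀ t ∈ I, HasDerivAt γ (X (γ t)) t) :
    ∀ t ∈ I, ∃ r : ℝ, 0 < r ∧ γ t = r • ξ₀ := by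
  intro t₁ ht₁
  rcases lt_trichotomy t₁ 0 with h | h | h
  · -- backward in time : reverse
    have hIcc : Icc t₁ 0 ⊆ I := hI.ordConnected.out ht₁ h0
    have hmem : ∀ t ∈ Icc (0:ℝ) (-t₁), -t ∈ I := by
      intro t ht
      exact hIcc ⟨by linarith [ht.2], by linarith [ht.1]⟩
    set X' : EuclideanSpace ℝ (Fin n) → EuclideanSpace ℝ (Fin n) := fun x => -X x with hX'
    have hlip' : ∀ x : EuclideanSpace ℝ (Fin n), x ≠ 0 →
        ∃ s ∈ nhds x, ∃ K : NNReal, LipschitzOnWith K X' s := by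
      intro x hx
      obtain ⟨s, hs, K, hK⟩ := hlip x hx
      refine ⟨s, hs, K, ?_⟩
      rw [← one_mul K]
      exact LipschitzWith.id.neg.comp_lipschitzOnWith hK
    have hhom' : ∀ t : ℝ, 0 < t → ∀ ξ : EuclideanSpace ℝ (Fin n), ξ ≠ 0 →
        X' (t • ξ) = (t ^ d) • X' ξ := by
      intro t ht ξ hξ
      show -X (t • ξ) = (t ^ d) • (-X ξ)
      rw [hhom t ht ξ hξ, smul_neg]
    have hrad' : X' ξ₀ = (-c) • ξ₀ := by
      show -X ξ₀ = (-c) • ξ₀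
      rw [hrad, neg_smul]
    have hkey := key_march X' hlip' d hhom' ξ₀ hξ₀ (-c) hrad' (-t₁) (by linarith)
      (fun t => γ (-t)) (by simp [hγ0])
      (fun t ht => hγne (-t) (hmem t ht))
      (fun t ht => by
        have h1 : HasDerivAt (fun u : ℝ => γ (-u)) (((-1 : ℝ)) • X (γ (-t))) t :=
          HasDerivAt.scomp (𝕜 := ℝ) (𝕜' := ℝ) t (hγ (-t) (hmem t ht)) (hasDerivAt_neg t)
        show HasDerivAt (fun t => γ (-t)) (-X (γ (-t))) t
        simpa using h1)
    obtain ⟨r, hr, hrEq⟩ := hkey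
    exact ⟨r, hr, by simpa using hrEq⟩
  · exact ⟨1, one_pos, by rw [h, hγ0, one_smul]⟩
  · have hIcc : Icc 0 t₁ ⊆ I := hI.ordConnected.out h0 ht₁
    exact key_march X hlip d hhom ξ₀ hξ₀ c hrad t₁ h.le γ hγ0
      (fun t ht => hγne t (hIcc ht)) (fun t ht => hγ t (hIcc ht))
end
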